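/- Let n ≥ 2, β ≥ 0, and let α satisfy −1 < α and α < β − 1/2. Then there is a constant C = C(n, α, β) such that for every δ with 0 < δ < 1/2, ∫_0^1 ∫_0^1 ∫_0^1 [ s_1^α t^{2n−3} / ( (δ + s_1 + s_2 + t²)^{2+β} (δ + s_1 + s_2 + t)^{2n−3} ) ] dt ds_2 ds_1 ≤ C δ^{α − β + 1/2}. -/

import Mathlib

/-! Put `A = δ + s₁ + s₂`. Since `t ≤ A + t`, the factor `t^(2n-3) / (A + t)^(2n-3)` is at most
one, and `(A + t²)^(2+β) ≥ A^(1+β) (A + t²)`. The `t`-integral of `(A + t²)⁻¹` is at most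
`(π/2) A^(-1/2)` (an arctangent), the `s₂`-integral of `(δ + s₁ + s₂)^(-(β+3/2))` is at most
`(δ + s₁)^(-(β+1/2)) / (β+1/2)`, and splitting the `s₁`-integral of `s₁^α (δ + s₁)^(-(β+1/2))`
at `s₁ = δ` bounds it by a multiple of `δ^(α-β+1/2)`: near `0` because `α > -1`, away from `0`
because `α - β - 1/2 < -1`. -/

open MeasureTheory Real Set

noncomputable section

lemma integral_Ioo_inv_add_sq_le {A b : ℝ} (hA : 0 < A) (hb : 0 ≤ b) :
    ∫ t in Ioo 0 b, (A + t ^ 2)⁻¹ ≤ π / 2 * A ^ (-(1 / 2) : ℝ) := by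
  have hA' : 0 < √A := sqrt_pos.mpr hA
  have hderiv : ∀ t ∈ uIcc 0 b,
      HasDerivAt (fun t => (√A)⁻¹ * arctan (t / √A)) (A + t ^ 2)⁻¹ t := by
    intro t _
    refine (((hasDerivAt_arctan _).comp t ((hasDerivAt_id' t).div_const √A)).const_mul
      (√A)⁻¹).congr_deriv ?_
    field_simp
    rw [sq_sqrt hA.le]
  have hcont : Continuous fun t : ℝ => (A + t ^ 2)⁻¹ :=
    (continuous_const.add (continuous_pow 2)).inv₀
      fun t => (add_pos_of_pos_of_nonneg hA (sq_nonneg t)).ne'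
  rw [← integral_Ioc_eq_integral_Ioo, ← intervalIntegral.integral_of_le hb,
    intervalIntegral.integral_eq_sub_of_hasDerivAt hderiv (hcont.intervalIntegrable _ _),
    rpow_neg hA.le, ← sqrt_eq_rpow]
  simp only [zero_div, arctan_zero, mul_zero, sub_zero]
  rw [mul_comm]
  gcongr
  exact (arctan_lt_pi_div_two _).le

lemma integral_Ioo_add_rpow_neg_le {B q b : ℝ} (hB : 0 < B) (hq : 0 < q) (hb : 0 ≤ b) :
    ∫ s in Ioo 0 b, (B + s) ^ (-(q + 1)) ≤ B ^ (-q) / q := by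
  have hpos : (0 : ℝ) ∉ uIcc B (B + b) := by
    rw [uIcc_of_le (by linarith)]
    exact fun h => hB.not_ge h.1
  rw [← integral_Ioc_eq_integral_Ioo, ← intervalIntegral.integral_of_le hb,
    intervalIntegral.integral_comp_add_left (fun x => x ^ (-(q + 1))), add_zero,
    integral_rpow (Or.inr ⟨by linarith, hpos⟩), show -(q + 1) + 1 = -q by ring,
    div_neg, ← neg_div, neg_sub]
  gcongr
  linarith [rpow_nonneg (hB.le.trans (le_add_of_nonneg_right hb)) (-q)]

lemma intervalIntegrable_rpow_mul_add_rpow {α r δ a b : ℝ} (hα : -1 < α) (hδ : 0 < δ)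
    (ha : 0 ≤ a) (hb : 0 ≤ b) :
    IntervalIntegrable (fun s => s ^ α * (δ + s) ^ r) volume a b := by
  refine (intervalIntegral.intervalIntegrable_rpow' hα).mul_continuousOn ?_
  refine ContinuousOn.rpow_const (by fun_prop) fun s hs => Or.inl ?_
  have : 0 ≤ s := (le_min ha hb).trans hs.1
  positivity

lemma integral_zero_self_rpow_mul_add_rpow_neg_le {α q δ : ℝ} (hα : -1 < α) (hq : 0 ≤ q)
    (hδ : 0 < δ) :
    ∫ s in 0..δ, s ^ α * (δ + s) ^ (-q) ≤ δ ^ (α + 1 - q) / (α + 1) := by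
  calc ∫ s in 0..δ, s ^ α * (δ + s) ^ (-q) ≤ ∫ s in 0..δ, δ ^ (-q) * s ^ α := by
        refine intervalIntegral.integral_mono_on hδ.le
          (intervalIntegrable_rpow_mul_add_rpow hα hδ le_rfl hδ.le)
          ((intervalIntegral.intervalIntegrable_rpow' hα).const_mul _) fun s hs => ?_
        rw [mul_comm]
        exact mul_le_mul_of_nonneg_right
          (rpow_le_rpow_of_nonpos hδ (by linarith [hs.1]) (neg_nonpos.2 hq)) (rpow_nonneg hs.1 _)
    _ = δ ^ (α + 1 - q) / (α + 1) := by
        rw [intervalIntegral.integral_const_mul, integral_rpow (Or.inl hα),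
          zero_rpow (by linarith), sub_zero, mul_div_assoc', ← rpow_add hδ]
        ring_nf

lemma integral_self_right_rpow_mul_add_rpow_neg_le {α q δ b : ℝ} (hq : 0 ≤ q) (hαq : α + 1 < q)
    (hδ : 0 < δ) (hδb : δ ≤ b) :
    ∫ s in δ..b, s ^ α * (δ + s) ^ (-q) ≤ δ ^ (α + 1 - q) / (q - α - 1) := by
  have hpos : (0 : ℝ) ∉ uIcc δ b := by
    rw [uIcc_of_le hδb]
    exact fun h => hδ.not_ge h.1
  have hcont : ContinuousOn (fun s : ℝ => s ^ α * (δ + s) ^ (-q)) (uIcc δ b) := by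
    rw [uIcc_of_le hδb]
    refine ContinuousOn.mul (continuousOn_id.rpow_const fun s hs => Or.inl ?_)
      ((continuousOn_const.add continuousOn_id).rpow_const fun s hs => Or.inl ?_)
    · exact (hδ.trans_le hs.1).ne'
    · exact (add_pos hδ (hδ.trans_le hs.1)).ne'
  calc ∫ s in δ..b, s ^ α * (δ + s) ^ (-q) ≤ ∫ s in δ..b, s ^ (α - q) := by
        refine intervalIntegral.integral_mono_on hδb hcont.intervalIntegrable
          (intervalIntegral.intervalIntegrable_rpow (Or.inr hpos)) fun s hs => ?_
        have hs₀ : 0 < s := hδ.trans_le hs.1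
        rw [sub_eq_add_neg, rpow_add hs₀]
        exact mul_le_mul_of_nonneg_left
          (rpow_le_rpow_of_nonpos hs₀ (by linarith) (neg_nonpos.2 hq)) (rpow_nonneg hs₀.le _)
    _ = (δ ^ (α + 1 - q) - b ^ (α + 1 - q)) / (q - α - 1) := by
        rw [integral_rpow (Or.inr ⟨by linarith, hpos⟩), ← neg_div_neg_eq, neg_sub]
        ring_nf
    _ ≤ δ ^ (α + 1 - q) / (q - α - 1) := by
        have : 0 < q - α - 1 := by linarith
        gcongr
        linarith [rpow_nonneg (hδ.le.trans hδb) (α + 1 - q)]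

lemma integral_rpow_mul_add_rpow_neg_le {α q δ b : ℝ} (hα : -1 < α) (hαq : α + 1 < q)
    (hδ : 0 < δ) (hδb : δ ≤ b) :
    ∫ s in Ioo 0 b, s ^ α * (δ + s) ^ (-q) ≤
      (1 / (α + 1) + 1 / (q - α - 1)) * δ ^ (α + 1 - q) := by
  have hb : 0 ≤ b := hδ.le.trans hδb
  rw [← integral_Ioc_eq_integral_Ioo, ← intervalIntegral.integral_of_le hb,
    ← intervalIntegral.integral_add_adjacent_intervals
      (intervalIntegrable_rpow_mul_add_rpow hα hδ le_rfl hδ.le)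
      (intervalIntegrable_rpow_mul_add_rpow hα hδ hδ.le hb)]
  calc _ ≤ δ ^ (α + 1 - q) / (α + 1) + δ ^ (α + 1 - q) / (q - α - 1) :=
        add_le_add (integral_zero_self_rpow_mul_add_rpow_neg_le hα (by linarith) hδ)
          (integral_self_right_rpow_mul_add_rpow_neg_le (by linarith) hαq hδ hδb)
    _ = _ := by ring

lemma pow_div_rpow_mul_pow_le (k : ℕ) {A t β : ℝ} (hA : 0 < A) (ht : 0 ≤ t) (hβ : -1 ≤ β) :
    t ^ k / ((A + t ^ 2) ^ ((2 : ℝ) + β) * (A + t) ^ k) ≤ A ^ (-(1 + β)) * (A + t ^ 2)⁻¹ := by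
  have hX : 0 < A + t ^ 2 := by positivity
  have hnum : t ^ k / (A + t) ^ k ≤ 1 :=
    div_le_one_of_le₀ (pow_le_pow_left₀ ht (by linarith) k) (by positivity)
  have hden : A ^ (1 + β) * (A + t ^ 2) ≤ (A + t ^ 2) ^ ((2 : ℝ) + β) := by
    rw [show (2 : ℝ) + β = (1 + β) + 1 by ring, rpow_add_one hX.ne']
    exact mul_le_mul_of_nonneg_right
      (rpow_le_rpow hA.le (le_add_of_nonneg_right (sq_nonneg t)) (by linarith)) hX.le
  calc t ^ k / ((A + t ^ 2) ^ ((2 : ℝ) + β) * (A + t) ^ k)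
      = (t ^ k / (A + t) ^ k) / (A + t ^ 2) ^ ((2 : ℝ) + β) := by ring
    _ ≤ 1 / (A ^ (1 + β) * (A + t ^ 2)) := by gcongr
    _ = A ^ (-(1 + β)) * (A + t ^ 2)⁻¹ := by rw [rpow_neg hA.le, one_div, mul_inv]

lemma integral_pow_div_rpow_mul_pow_le (k : ℕ) {A β : ℝ} (hA : 0 < A) (hβ : -1 ≤ β) :
    ∫ t in Ioo 0 1, t ^ k / ((A + t ^ 2) ^ ((2 : ℝ) + β) * (A + t) ^ k) ≤
      π / 2 * A ^ (-(β + 3 / 2)) := by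
  have hcont : Continuous fun t : ℝ => A ^ (-(1 + β)) * (A + t ^ 2)⁻¹ :=
    continuous_const.mul ((continuous_const.add (continuous_pow 2)).inv₀
      fun t => (add_pos_of_pos_of_nonneg hA (sq_nonneg t)).ne')
  calc _ ≤ ∫ t in Ioo 0 1, A ^ (-(1 + β)) * (A + t ^ 2)⁻¹ := by
        refine integral_mono_of_nonneg ?_ (hcont.integrableOn_Icc.mono_set Ioo_subset_Icc_self) ?_
        all_goals
          filter_upwards [ae_restrict_mem measurableSet_Ioo] with t ht
          have : 0 < t := ht.1
        · positivity
        · exact pow_div_rpow_mul_pow_le k hA this.le hβ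
    _ ≤ A ^ (-(1 + β)) * (π / 2 * A ^ (-(1 / 2) : ℝ)) := by
        rw [integral_const_mul]
        gcongr
        exact integral_Ioo_inv_add_sq_le hA zero_le_one
    _ = π / 2 * A ^ (-(β + 3 / 2)) := by
        rw [mul_left_comm, ← rpow_add hA]
        ring_nf

lemma integral_integral_pow_div_rpow_mul_pow_le (k : ℕ) {B β : ℝ} (hB : 0 < B)
    (hβ : -1 / 2 < β) :
    ∫ s in Ioo 0 1, ∫ t in Ioo 0 1, t ^ k / ((B + s + t ^ 2) ^ ((2 : ℝ) + β) * (B + s + t) ^ k) ≤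
      π / 2 / (β + 1 / 2) * B ^ (-(β + 1 / 2)) := by
  have hcont : ContinuousOn (fun s : ℝ => π / 2 * (B + s) ^ (-(β + 3 / 2))) (Icc 0 1) :=
    continuousOn_const.mul ((continuousOn_const.add continuousOn_id).rpow_const
      fun s hs => Or.inl (add_pos_of_pos_of_nonneg hB hs.1).ne')
  calc _ ≤ ∫ s in Ioo 0 1, π / 2 * (B + s) ^ (-(β + 3 / 2)) := by
        refine integral_mono_of_nonneg ?_ (hcont.integrableOn_Icc.mono_set Ioo_subset_Icc_self) ?_
        all_goals
          filter_upwards [ae_restrict_mem measurableSet_Ioo] with s hs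
          have : 0 < B + s := add_pos hB hs.1
        · refine setIntegral_nonneg measurableSet_Ioo fun t ht => ?_
          have : 0 < t := ht.1
          positivity
        · exact integral_pow_div_rpow_mul_pow_le k this (by linarith)
    _ ≤ π / 2 * (B ^ (-(β + 1 / 2)) / (β + 1 / 2)) := by
        rw [integral_const_mul, show -(β + 3 / 2) = -((β + 1 / 2) + 1) by ring]
        gcongr
        exact integral_Ioo_add_rpow_neg_le hB (by linarith) zero_le_one
    _ = _ := by ring

theorem weighted_kernel_integral_estimate_general
    (n : ℕ) (α β : ℝ) (hα₁ : -1 < α) (hα₂ : α < β - 1 / 2) :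
    ∃ C : ℝ, ∀ δ : ℝ, 0 < δ → δ < 1 / 2 →
      (∫ s₁ in Set.Ioo (0 : ℝ) 1, ∫ s₂ in Set.Ioo (0 : ℝ) 1, ∫ t in Set.Ioo (0 : ℝ) 1,
          s₁ ^ α * t ^ (2 * n - 3) /
            ((δ + s₁ + s₂ + t ^ 2) ^ ((2 : ℝ) + β) * (δ + s₁ + s₂ + t) ^ (2 * n - 3))) ≤
        C * δ ^ (α - β + 1 / 2) := by
  set q := β + 1 / 2 with hq
  refine ⟨π / 2 / q * (1 / (α + 1) + 1 / (q - α - 1)), fun δ hδ hδ₂ => ?_⟩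
  have hδ₁ : δ ≤ 1 := by linarith
  have hq₀ : 0 < q := by linarith
  simp_rw [mul_div_assoc, integral_const_mul]
  have hintegrable : IntegrableOn (fun s => s ^ α * (δ + s) ^ (-q)) (Ioo 0 1) :=
    (intervalIntegrable_iff_integrableOn_Ioo_of_le zero_le_one).1
      (intervalIntegrable_rpow_mul_add_rpow hα₁ hδ le_rfl zero_le_one)
  calc _ ≤ ∫ s₁ in Ioo 0 1, π / 2 / q * (s₁ ^ α * (δ + s₁) ^ (-q)) := by
        refine integral_mono_of_nonneg ?_ (hintegrable.const_mul _) ?_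
        all_goals
          filter_upwards [ae_restrict_mem measurableSet_Ioo] with s hs
          have : 0 < s := hs.1
        · refine mul_nonneg (rpow_nonneg this.le _) (setIntegral_nonneg measurableSet_Ioo
            fun s₂ hs₂ => setIntegral_nonneg measurableSet_Ioo fun t ht => ?_)
          have : 0 < s₂ := hs₂.1
          have : 0 < t := ht.1
          positivity
        · rw [mul_left_comm]
          exact mul_le_mul_of_nonneg_left
            (integral_integral_pow_div_rpow_mul_pow_le _ (add_pos hδ this) (by linarith))
            (rpow_nonneg this.le _)
    _ ≤ π / 2 / q * ((1 / (α + 1) + 1 / (q - α - 1)) * δ ^ (α + 1 - q)) := by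
        rw [integral_const_mul]
        exact mul_le_mul_of_nonneg_left
          (integral_rpow_mul_add_rpow_neg_le hα₁ (by linarith) hδ hδ₁) (by positivity)
    _ = _ := by rw [show α + 1 - q = α - β + 1 / 2 by ring, mul_assoc]

/-- **The key scalar integral estimate in Lemma 4.9.** Let `n ≥ 2`, `β ≥ 0`,
`-1 < α < β - 1/2`. Then there is `C = C(n, α, β)` such that for all `0 < δ < 1/2`,
`∫₀¹∫₀¹∫₀¹ s₁^α t^{2n-3} / ((δ+s₁+s₂+t²)^{2+β} (δ+s₁+s₂+t)^{2n-3}) dt ds₂ ds₁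
  ≤ C δ^{α-β+1/2}`. -/
theorem weighted_kernel_integral_estimate
    (n : ℕ) (hn : 2 ≤ n) (α β : ℝ) (hβ : 0 ≤ β) (hα₁ : -1 < α) (hα₂ : α < β - 1 / 2) :
    ∃ C : ℝ, ∀ δ : ℝ, 0 < δ → δ < 1 / 2 →
      (∫ s₁ in Set.Ioo (0 : ℝ) 1, ∫ s₂ in Set.Ioo (0 : ℝ) 1, ∫ t in Set.Ioo (0 : ℝ) 1,
          s₁ ^ α * t ^ (2 * n - 3) /
            ((δ + s₁ + s₂ + t ^ 2) ^ ((2 : ℝ) + β) * (δ + s₁ + s₂ + t) ^ (2 * n - 3))) ≤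
        C * δ ^ (α - β + 1 / 2) :=
  weighted_kernel_integral_estimate_general n α β hα₁ hα₂

end
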